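/- arXiv:2410.04761 — 3 statements merged into one kernel-verified Lean document; each statement's English description precedes it below -/
import Mathlib

section
/- Under the assumptions that each f_i is l-smooth and f is μ-strongly concave in y with κ = l/μ, the function Φ(x) := max_y f(x,y) is differentiable with ∇Φ(x) = ∇_x f(x, y*(x)), and ∇Φ is (l + κl)-Lipschitz. -/
open scoped RealInnerProductSpace

noncomputable def gradx {d : ℕ}
    (f : EuclideanSpace ℝ (Fin d) → EuclideanSpace ℝ (Fin d) → ℝ)
    (x y : EuclideanSpace ℝ (Fin d)) : EuclideanSpace ℝ (Fin d) :=
  gradient (fun x' => f x' y) x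

noncomputable def grady {d : ℕ}
    (f : EuclideanSpace ℝ (Fin d) → EuclideanSpace ℝ (Fin d) → ℝ)
    (x y : EuclideanSpace ℝ (Fin d)) : EuclideanSpace ℝ (Fin d) :=
  gradient (f x) y

/-! Strong concavity makes the maximizer `y*` Lipschitz with constant `κ = l/μ`: the `y`-gradients
vanish at `y₁ = y*(x₁)` and `y₂ = y*(x₂)`, so strong monotonicity of `-∇_y f(x₁, ·)` gives
`μ‖y₁ - y₂‖² ≤ ⟪∇_y f(x₂, y₂) - ∇_y f(x₁, y₂), y₂ - y₁⟫ ≤ l‖x₁ - x₂‖‖y₁ - y₂‖`.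
By maximality, `Φ(x') - Φ(x)` lies between the increments `f(x', y) - f(x, y)` at `y = y*(x)` and
`y = y*(x')`; both agree with `⟪∇ₓf(x, y*(x)), x' - x⟫` up to `O(‖x' - x‖²)`, the second because
`‖y*(x') - y*(x)‖ ≤ κ‖x' - x‖`. Hence `∇Φ(x) = ∇ₓf(x, y*(x))`, which is `(l + κl)`-Lipschitz as
the composition of `∇ₓf` with `x ↦ (x, y*(x))`. -/

open InnerProductSpace Set Asymptotics Filter Topology

section Gradient

variable {E : Type*} [NormedAddCommGroup E] [InnerProductSpace ℝ E] [CompleteSpace E]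
  {g : E → ℝ} {G : E} {x : E}

theorem HasGradientAt.const_mul (c : ℝ) (h : HasGradientAt g G x) :
    HasGradientAt (fun y => c * g y) (c • G) x := by
  rw [hasGradientAt_iff_hasFDerivAt, map_smul]
  exact h.hasFDerivAt.const_mul c

theorem HasGradientAt.add {g' : E → ℝ} {G' : E} (h : HasGradientAt g G x)
    (h' : HasGradientAt g' G' x) : HasGradientAt (fun y => g y + g' y) (G + G') x := by
  rw [hasGradientAt_iff_hasFDerivAt, map_add]
  exact h.hasFDerivAt.add h'.hasFDerivAt

theorem HasGradientAt.fun_sum {ι : Type*} {s : Finset ι} {g : ι → E → ℝ} {G : ι → E}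
    (h : ∀ i ∈ s, HasGradientAt (g i) (G i) x) :
    HasGradientAt (fun y => ∑ i ∈ s, g i y) (∑ i ∈ s, G i) x := by
  rw [hasGradientAt_iff_hasFDerivAt, map_sum]
  exact HasFDerivAt.fun_sum fun i hi => (h i hi).hasFDerivAt

theorem hasGradientAt_norm_sq (x : E) : HasGradientAt (fun y => ‖y‖ ^ 2) ((2 : ℝ) • x) x := by
  have hdual : toDual ℝ E ((2 : ℝ) • x) = 2 • innerSL ℝ x := by
    ext v
    simp
  rw [hasGradientAt_iff_hasFDerivAt, hdual]
  exact (hasStrictFDerivAt_norm_sq x).hasFDerivAt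

theorem IsLocalMax.hasGradientAt_eq_zero (hmax : IsLocalMax g x) (h : HasGradientAt g G x) :
    G = 0 :=
  (toDual ℝ E).map_eq_zero_iff.1 (hmax.hasFDerivAt_eq_zero h.hasFDerivAt)

theorem hasGradientAt_of_abs_sub_sub_inner_le {C : ℝ}
    (h : ∀ y, |g y - g x - ⟪G, y - x⟫| ≤ C * ‖y - x‖ ^ 2) : HasGradientAt g G x := by
  rw [hasGradientAt_iff_isLittleO]
  have hO : (fun y => g y - g x - ⟪G, y - x⟫) =O[𝓝 x] fun y => ‖y - x‖ ^ 2 :=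
    IsBigO.of_bound C (Eventually.of_forall fun y => by simpa using h y)
  refine hO.trans_isLittleO ((isLittleO_norm_pow_id one_lt_two).comp_tendsto ?_)
  exact tendsto_sub_nhds_zero_iff.2 tendsto_id

theorem abs_sub_sub_inner_le_of_hasGradientAt {G : E → E} {L : ℝ} (hL₀ : 0 ≤ L)
    (hG : ∀ y, HasGradientAt g (G y) y) (hL : ∀ y, ‖G y - G x‖ ≤ L * ‖y - x‖) (y : E) :
    |g y - g x - ⟪G x, y - x⟫| ≤ L * ‖y - x‖ ^ 2 := by
  have hy : y ∈ Metric.closedBall x ‖y - x‖ := by simp [dist_eq_norm]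
  have key := (convex_closedBall x ‖y - x‖).norm_image_sub_le_of_norm_hasFDerivWithin_le'
    (fun z _ => (hG z).hasFDerivAt.hasFDerivWithinAt) (φ := toDual ℝ E (G x))
    (fun z hz => by
      rw [← map_sub, LinearIsometryEquiv.norm_map]
      exact (hL z).trans (mul_le_mul_of_nonneg_left (by simpa [dist_eq_norm] using hz) hL₀))
    (Metric.mem_closedBall_self (norm_nonneg _)) hy
  rw [toDual_apply_apply, Real.norm_eq_abs] at key
  linarith

theorem ConcaveOn.le_add_inner_of_hasGradientAt (hg : ConcaveOn ℝ univ g)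
    (h : HasGradientAt g G x) (y : E) : g y ≤ g x + ⟪G, y - x⟫ := by
  have hφ : ConcaveOn ℝ univ (g ∘ AffineMap.lineMap x y) :=
    hg.comp_affineMap (AffineMap.lineMap x y)
  have hφ' : HasDerivAt (g ∘ AffineMap.lineMap x y) ⟪G, y - x⟫ (0 : ℝ) := by
    simpa using h.hasFDerivAt.comp_hasDerivAt_of_eq (0 : ℝ) AffineMap.hasDerivAt_lineMap
      (AffineMap.lineMap_apply_zero x y).symm
  have hslope := hφ.slope_le_of_hasDerivAt (mem_univ (0 : ℝ)) (mem_univ 1) one_pos hφ'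
  simp only [slope_def_field, Function.comp_apply, AffineMap.lineMap_apply_zero,
    AffineMap.lineMap_apply_one, sub_zero, div_one] at hslope
  linarith

theorem StrongConcaveOn.le_add_inner_sub_of_hasGradientAt {m : ℝ}
    (hg : StrongConcaveOn univ m g) (h : HasGradientAt g G x) (y : E) :
    g y ≤ g x + ⟪G, y - x⟫ - m / 2 * ‖y - x‖ ^ 2 := by
  have hconc := (strongConcaveOn_iff_convex.1 hg).le_add_inner_of_hasGradientAt
    (h.add ((hasGradientAt_norm_sq x).const_mul (m / 2))) y
  simp only [inner_add_left, real_inner_smul_left, inner_sub_right,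
    real_inner_self_eq_norm_sq] at hconc
  rw [norm_sub_sq_real, inner_sub_right, real_inner_comm x y]
  linarith

theorem StrongConcaveOn.mul_norm_sub_sq_le_inner_of_hasGradientAt {m : ℝ} {G : E → E}
    (hg : StrongConcaveOn univ m g) (h : ∀ y, HasGradientAt g (G y) y) (x y : E) :
    m * ‖x - y‖ ^ 2 ≤ ⟪G x - G y, y - x⟫ := by
  have hxy := hg.le_add_inner_sub_of_hasGradientAt (h x) y
  have hyx := hg.le_add_inner_sub_of_hasGradientAt (h y) x
  rw [norm_sub_rev] at hxy
  simp only [inner_sub_left, inner_sub_right] at hxy hyx ⊢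
  linarith

end Gradient

section JointLipschitz

variable {X Y Z : Type*} [SeminormedAddCommGroup X] [SeminormedAddCommGroup Y]
  [SeminormedAddCommGroup Z]

/-- Lipschitz continuity for the norm `‖x‖ + ‖y‖` on `X × Y`; the paper's `l`-smoothness of `f` is
this property of its two partial gradients. -/
def JointLipschitzWith (l : ℝ) (G : X → Y → Z) : Prop :=
  ∀ x₁ y₁ x₂ y₂, ‖G x₁ y₁ - G x₂ y₂‖ ≤ l * (‖x₁ - x₂‖ + ‖y₁ - y₂‖)

theorem JointLipschitzWith.mean [NormedSpace ℝ Z] {n : ℕ} {l : ℝ} {G : Fin n → X → Y → Z}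
    (hl : 0 ≤ l) (h : ∀ i, JointLipschitzWith l (G i)) :
    JointLipschitzWith l fun x y => (n : ℝ)⁻¹ • ∑ i, G i x y := by
  intro x₁ y₁ x₂ y₂
  rw [← smul_sub, ← Finset.sum_sub_distrib, norm_smul, norm_inv, Real.norm_natCast]
  calc (n : ℝ)⁻¹ * ‖∑ i, (G i x₁ y₁ - G i x₂ y₂)‖
      ≤ (n : ℝ)⁻¹ * (n * (l * (‖x₁ - x₂‖ + ‖y₁ - y₂‖))) := by
        gcongr
        simpa using norm_sum_le_of_le Finset.univ fun i _ => h i x₁ y₁ x₂ y₂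
    _ = ((n : ℝ)⁻¹ * n) * (l * (‖x₁ - x₂‖ + ‖y₁ - y₂‖)) := by ring
    _ ≤ l * (‖x₁ - x₂‖ + ‖y₁ - y₂‖) := mul_le_of_le_one_left (by positivity) inv_mul_le_one

theorem JointLipschitzWith.norm_sub_le_comp {l κ : ℝ} {G : X → Y → Z} {φ : X → Y}
    (hG : JointLipschitzWith l G) (hl : 0 ≤ l) (hφ : ∀ x₁ x₂, ‖φ x₁ - φ x₂‖ ≤ κ * ‖x₁ - x₂‖)
    (x₁ x₂ : X) : ‖G x₁ (φ x₁) - G x₂ (φ x₂)‖ ≤ (l + κ * l) * ‖x₁ - x₂‖ :=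
  calc ‖G x₁ (φ x₁) - G x₂ (φ x₂)‖ ≤ l * (‖x₁ - x₂‖ + κ * ‖x₁ - x₂‖) :=
        (hG _ _ _ _).trans (by gcongr; exact hφ x₁ x₂)
    _ = (l + κ * l) * ‖x₁ - x₂‖ := by ring

end JointLipschitz

section Danskin

variable {X Y : Type*} {f : X → Y → ℝ} {ystar : X → Y} {l : ℝ}

theorem norm_sub_le_of_isMaxOn_of_strongConcaveOn [SeminormedAddCommGroup X]
    [NormedAddCommGroup Y] [InnerProductSpace ℝ Y] [CompleteSpace Y] {Gy : X → Y → Y} {μ : ℝ}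
    (hμ : 0 < μ) (hGy : ∀ x y, HasGradientAt (f x) (Gy x y) y) (hLy : JointLipschitzWith l Gy)
    (hconc : ∀ x, StrongConcaveOn univ μ (f x)) (hmax : ∀ x, IsMaxOn (f x) univ (ystar x))
    (x₁ x₂ : X) : ‖ystar x₁ - ystar x₂‖ ≤ l / μ * ‖x₁ - x₂‖ := by
  set y₁ := ystar x₁
  set y₂ := ystar x₂
  have hstat : ∀ x, Gy x (ystar x) = 0 := fun x =>
    ((hmax x).isLocalMax univ_mem).hasGradientAt_eq_zero (hGy x _)
  have hL : ‖Gy x₂ y₂ - Gy x₁ y₂‖ ≤ l * ‖x₁ - x₂‖ := by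
    simpa [norm_sub_rev x₂] using hLy x₂ y₂ x₁ y₂
  have hmono : μ * ‖y₁ - y₂‖ ^ 2 ≤ l * ‖x₁ - x₂‖ * ‖y₁ - y₂‖ :=
    calc μ * ‖y₁ - y₂‖ ^ 2 ≤ ⟪Gy x₁ y₁ - Gy x₁ y₂, y₂ - y₁⟫ :=
          (hconc x₁).mul_norm_sub_sq_le_inner_of_hasGradientAt (hGy x₁) y₁ y₂
      _ = ⟪Gy x₂ y₂ - Gy x₁ y₂, y₂ - y₁⟫ := by rw [hstat x₁, hstat x₂]
      _ ≤ ‖Gy x₂ y₂ - Gy x₁ y₂‖ * ‖y₂ - y₁‖ := real_inner_le_norm _ _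
      _ ≤ l * ‖x₁ - x₂‖ * ‖y₁ - y₂‖ := by rw [norm_sub_rev y₂]; gcongr
  rw [div_mul_eq_mul_div, le_div_iff₀ hμ]
  rcases (norm_nonneg (y₁ - y₂)).eq_or_lt with h0 | hpos
  · rw [← h0, zero_mul]
    exact (norm_nonneg _).trans hL
  · nlinarith

theorem hasGradientAt_of_isMaxOn [NormedAddCommGroup X] [InnerProductSpace ℝ X]
    [CompleteSpace X] [SeminormedAddCommGroup Y] {Gx : X → Y → X} {κ : ℝ}
    (hl : 0 ≤ l) (hκ : 0 ≤ κ)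
    (hGx : ∀ x y, HasGradientAt (fun x => f x y) (Gx x y) x) (hLx : JointLipschitzWith l Gx)
    (hystar : ∀ x₁ x₂, ‖ystar x₁ - ystar x₂‖ ≤ κ * ‖x₁ - x₂‖)
    (hmax : ∀ x, IsMaxOn (f x) univ (ystar x)) (x : X) :
    HasGradientAt (fun x => f x (ystar x)) (Gx x (ystar x)) x := by
  refine hasGradientAt_of_abs_sub_sub_inner_le (C := l + κ * l) fun x' => ?_
  set y := ystar x
  set y' := ystar x'
  have hdesc : ∀ y, |f x' y - f x y - ⟪Gx x y, x' - x⟫| ≤ l * ‖x' - x‖ ^ 2 := fun y =>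
    abs_sub_sub_inner_le_of_hasGradientAt hl (fun z => hGx z y)
      (fun z => by simpa using hLx z y x y) x'
  have hcross : ⟪Gx x y' - Gx x y, x' - x⟫ ≤ κ * l * ‖x' - x‖ ^ 2 :=
    calc ⟪Gx x y' - Gx x y, x' - x⟫ ≤ ‖Gx x y' - Gx x y‖ * ‖x' - x‖ := real_inner_le_norm _ _
      _ ≤ l * (κ * ‖x' - x‖) * ‖x' - x‖ := by
          gcongr
          exact (by simpa using hLx x y' x y : _ ≤ l * ‖y' - y‖).trans
            (by gcongr; exact hystar x' x)
      _ = κ * l * ‖x' - x‖ ^ 2 := by ring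
  have hy : f x' y ≤ f x' y' := hmax x' (mem_univ _)
  have hy' : f x y' ≤ f x y := hmax x (mem_univ _)
  have hκl : 0 ≤ κ * l * ‖x' - x‖ ^ 2 := by positivity
  rw [inner_sub_left] at hcross
  obtain ⟨hlow, -⟩ := abs_le.1 (hdesc y)
  obtain ⟨-, hup⟩ := abs_le.1 (hdesc y')
  rw [abs_le]
  constructor <;> linarith

end Danskin

theorem Phi_smooth_danskin_general {d n : ℕ} (l μ : ℝ) (hl : 0 < l) (hμ : 0 < μ)
    (fi : Fin n → EuclideanSpace ℝ (Fin d) → EuclideanSpace ℝ (Fin d) → ℝ)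
    (hdx : ∀ i y, Differentiable ℝ (fun x => fi i x y))
    (hdy : ∀ i x, Differentiable ℝ (fi i x))
    (hsmooth_x : ∀ i x₁ y₁ x₂ y₂,
      ‖gradx (fi i) x₁ y₁ - gradx (fi i) x₂ y₂‖ ≤ l * (‖x₁ - x₂‖ + ‖y₁ - y₂‖))
    (hsmooth_y : ∀ i x₁ y₁ x₂ y₂,
      ‖grady (fi i) x₁ y₁ - grady (fi i) x₂ y₂‖ ≤ l * (‖x₁ - x₂‖ + ‖y₁ - y₂‖))
    (f : EuclideanSpace ℝ (Fin d) → EuclideanSpace ℝ (Fin d) → ℝ)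
    (hf : ∀ x y, f x y = (n : ℝ)⁻¹ * ∑ i, fi i x y)
    (hconc : ∀ x, ConcaveOn ℝ Set.univ (fun y => f x y + (μ / 2) * ‖y‖ ^ 2))
    (ystar : EuclideanSpace ℝ (Fin d) → EuclideanSpace ℝ (Fin d))
    (hmax : ∀ x, IsMaxOn (f x) Set.univ (ystar x))
    (Φ : EuclideanSpace ℝ (Fin d) → ℝ) (hΦ : ∀ x, Φ x = f x (ystar x)) :
    (∀ x, HasGradientAt Φ (gradx f x (ystar x)) x) ∧
      (∀ x₁ x₂, ‖gradient Φ x₁ - gradient Φ x₂‖ ≤ (l + (l / μ) * l) * ‖x₁ - x₂‖) := by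
  obtain rfl : f = fun x y => (n : ℝ)⁻¹ * ∑ i, fi i x y := funext₂ hf
  obtain rfl : Φ = fun x => (n : ℝ)⁻¹ * ∑ i, fi i x (ystar x) := funext hΦ
  have hGx : ∀ x y, HasGradientAt (fun x => (n : ℝ)⁻¹ * ∑ i, fi i x y)
      ((n : ℝ)⁻¹ • ∑ i, gradx (fi i) x y) x := fun x y =>
    (HasGradientAt.fun_sum fun i _ => (hdx i y x).hasGradientAt).const_mul _
  have hGy : ∀ x y, HasGradientAt (fun y => (n : ℝ)⁻¹ * ∑ i, fi i x y)
      ((n : ℝ)⁻¹ • ∑ i, grady (fi i) x y) y := fun x y =>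
    (HasGradientAt.fun_sum fun i _ => (hdy i x y).hasGradientAt).const_mul _
  have hLx := JointLipschitzWith.mean hl.le hsmooth_x
  have hystar := norm_sub_le_of_isMaxOn_of_strongConcaveOn hμ hGy
    (JointLipschitzWith.mean hl.le hsmooth_y) (fun x => strongConcaveOn_iff_convex.2 (hconc x))
    hmax
  have hgrad := hasGradientAt_of_isMaxOn hl.le (by positivity) hGx hLx hystar hmax
  refine ⟨fun x => by rw [gradx, (hGx x (ystar x)).gradient]; exact hgrad x, fun x₁ x₂ => ?_⟩
  rw [(hgrad x₁).gradient, (hgrad x₂).gradient]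
  exact hLx.norm_sub_le_comp hl.le hystar x₁ x₂

theorem Phi_smooth_danskin {d n : ℕ} (hn : 0 < n) (l μ : ℝ) (hl : 0 < l) (hμ : 0 < μ)
    (hκ : 1 ≤ l / μ)
    (fi : Fin n → EuclideanSpace ℝ (Fin d) → EuclideanSpace ℝ (Fin d) → ℝ)
    (hdx : ∀ i y, Differentiable ℝ (fun x => fi i x y))
    (hdy : ∀ i x, Differentiable ℝ (fi i x))
    (hsmooth_x : ∀ i x₁ y₁ x₂ y₂,
      ‖gradx (fi i) x₁ y₁ - gradx (fi i) x₂ y₂‖ ≤ l * (‖x₁ - x₂‖ + ‖y₁ - y₂‖))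
    (hsmooth_y : ∀ i x₁ y₁ x₂ y₂,
      ‖grady (fi i) x₁ y₁ - grady (fi i) x₂ y₂‖ ≤ l * (‖x₁ - x₂‖ + ‖y₁ - y₂‖))
    (f : EuclideanSpace ℝ (Fin d) → EuclideanSpace ℝ (Fin d) → ℝ)
    (hf : ∀ x y, f x y = (n : ℝ)⁻¹ * ∑ i, fi i x y)
    (hconc : ∀ x, ConcaveOn ℝ Set.univ (fun y => f x y + (μ / 2) * ‖y‖ ^ 2))
    (ystar : EuclideanSpace ℝ (Fin d) → EuclideanSpace ℝ (Fin d))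
    (hmax : ∀ x, IsMaxOn (f x) Set.univ (ystar x))
    (Φ : EuclideanSpace ℝ (Fin d) → ℝ) (hΦ : ∀ x, Φ x = f x (ystar x)) :
    (∀ x, HasGradientAt Φ (gradx f x (ystar x)) x) ∧
      (∀ x₁ x₂, ‖gradient Φ x₁ - gradient Φ x₂‖ ≤ (l + (l / μ) * l) * ‖x₁ - x₂‖) :=
  Phi_smooth_danskin_general l μ hl hμ fi hdx hdy hsmooth_x hsmooth_y f hf hconc ystar hmax Φ hΦ
end

section
/- Suppose f is l-smooth (jointly in (x,y)), f(x,·) is μ-strongly concave with Φ(x) := max_y f(x,y) and unique maximizer y*(x), and κ = l/μ. Then for any vector h and any (x,y): ‖∇Φ(x) − h‖² ≤ 4lκ(Φ(x) − f(x,y)) + 2‖∇_x f(x,y) − h‖². -/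
open scoped RealInnerProductSpace


-- quadratic growth lemma
theorem quad_growth {d : ℕ} (μ : ℝ) (_hμ : 0 < μ)
    (g : EuclideanSpace ℝ (Fin d) → ℝ)
    (hconc : ConcaveOn ℝ Set.univ (fun y => g y + (μ / 2) * ‖y‖ ^ 2))
    (a : EuclideanSpace ℝ (Fin d)) (hmax : IsMaxOn g Set.univ a)
    (b : EuclideanSpace ℝ (Fin d)) :
    g b + (μ / 2) * ‖a - b‖ ^ 2 ≤ g a := by
  set c : ℝ := (μ / 2) * ‖a - b‖ ^ 2 with hc
  have key : ∀ t ∈ Set.Ioo (0:ℝ) 1, (1 - t) * c ≤ g a - g b := by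
    intro t ht
    obtain ⟨ht0, ht1⟩ := ht
    have hcomb := hconc.2 (Set.mem_univ a) (Set.mem_univ b)
      (show (0:ℝ) ≤ 1 - t by linarith) (le_of_lt ht0) (by ring)
    have hmax' : g ((1 - t) • a + t • b) ≤ g a := hmax (Set.mem_univ _)
    have hnorm : ‖(1 - t) • a + t • b‖ ^ 2
        = (1 - t)^2 * ‖a‖^2 + 2 * t * (1 - t) * ⟪a, b⟫ + t^2 * ‖b‖^2 := by
      simp only [← real_inner_self_eq_norm_sq, inner_add_left, inner_add_right,
        real_inner_smul_left, real_inner_smul_right, real_inner_comm a b]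
      ring
    have hnorm2 : ‖a - b‖ ^ 2 = ‖a‖^2 - 2 * ⟪a, b⟫ + ‖b‖^2 := by
      simp only [← real_inner_self_eq_norm_sq, inner_sub_left, inner_sub_right,
        real_inner_comm a b]
      ring
    simp only [smul_eq_mul] at hcomb
    have h1 : 0 < t := ht0
    rw [hc]
    rw [hnorm] at hcomb
    rw [hnorm2]
    nlinarith [hcomb, hmax', mul_pos h1 (by linarith : (0:ℝ) < 1 - t)]
  have hlim : Filter.Tendsto (fun t : ℝ => (1 - t) * c) (nhdsWithin 0 (Set.Ioo (0:ℝ) 1)) (nhds c) := by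
    have : Filter.Tendsto (fun t : ℝ => (1 - t) * c) (nhds 0) (nhds ((1 - 0) * c)) := by
      exact (Filter.Tendsto.const_sub 1 Filter.tendsto_id).mul_const c
    simpa using this.mono_left nhdsWithin_le_nhds
  have hne : (nhdsWithin (0:ℝ) (Set.Ioo (0:ℝ) 1)).NeBot := by
    rw [← mem_closure_iff_nhdsWithin_neBot, closure_Ioo (by norm_num : (0:ℝ) ≠ 1)]
    exact ⟨le_refl 0, by norm_num⟩
  have : c ≤ g a - g b :=
    le_of_tendsto hlim (Filter.eventually_of_mem self_mem_nhdsWithin key)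
  linarith

theorem bias_decomposition_bound {d : ℕ} (l μ : ℝ) (hl : 0 < l) (hμ : 0 < μ)
    (f : EuclideanSpace ℝ (Fin d) → EuclideanSpace ℝ (Fin d) → ℝ)
    (hdx : ∀ y, Differentiable ℝ (fun x => f x y))
    (hdy : ∀ x, Differentiable ℝ (f x))
    (hsmooth_x : ∀ x₁ y₁ x₂ y₂,
      ‖gradx f x₁ y₁ - gradx f x₂ y₂‖ ≤ l * (‖x₁ - x₂‖ + ‖y₁ - y₂‖))
    (hsmooth_y : ∀ x₁ y₁ x₂ y₂,
      ‖grady f x₁ y₁ - grady f x₂ y₂‖ ≤ l * (‖x₁ - x₂‖ + ‖y₁ - y₂‖))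
    (hconc : ∀ x, ConcaveOn ℝ Set.univ (fun y => f x y + (μ / 2) * ‖y‖ ^ 2))
    (ystar : EuclideanSpace ℝ (Fin d) → EuclideanSpace ℝ (Fin d))
    (hmax : ∀ x, IsMaxOn (f x) Set.univ (ystar x))
    (Φ : EuclideanSpace ℝ (Fin d) → ℝ) (hΦ : ∀ x, Φ x = f x (ystar x)) :
    ∀ x y (h : EuclideanSpace ℝ (Fin d)),
      ‖gradx f x (ystar x) - h‖ ^ 2 ≤
        4 * l * (l / μ) * (Φ x - f x y) + 2 * ‖gradx f x y - h‖ ^ 2 := by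
  intro x y h
  have qg := quad_growth μ hμ (f x) (hconc x) (ystar x) (hmax x) y
  -- smoothness bound
  have hs := hsmooth_x x (ystar x) x y
  simp only [sub_self, norm_zero, zero_add] at hs
  -- triangle inequality
  have htri : ‖gradx f x (ystar x) - h‖ ≤
      ‖gradx f x (ystar x) - gradx f x y‖ + ‖gradx f x y - h‖ := by
    have := norm_sub_le_norm_sub_add_norm_sub (gradx f x (ystar x)) (gradx f x y) h
    exact this
  have hA : (0:ℝ) ≤ ‖gradx f x (ystar x) - gradx f x y‖ := norm_nonneg _
  have hB : (0:ℝ) ≤ ‖gradx f x y - h‖ := norm_nonneg _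
  have hC : (0:ℝ) ≤ ‖gradx f x (ystar x) - h‖ := norm_nonneg _
  have hD : (0:ℝ) ≤ ‖ystar x - y‖ := norm_nonneg _
  have hΦx := hΦ x
  -- key: μ/2 * ‖ystar x - y‖^2 ≤ Φ x - f x y
  have hqg : (μ/2) * ‖ystar x - y‖^2 ≤ Φ x - f x y := by
    rw [hΦx]; linarith
  have hlμ : 4 * l * (l / μ) * (Φ x - f x y) = (4 * l * l / μ) * (Φ x - f x y) := by
    ring
  have h2 : ‖gradx f x (ystar x) - gradx f x y‖^2 ≤ l^2 * ‖ystar x - y‖^2 := by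
    nlinarith [hs, hA, hD, hl.le]
  have h3 : 2 * (l^2 * ‖ystar x - y‖^2) ≤ 4 * l * (l / μ) * (Φ x - f x y) := by
    rw [hlμ]
    have : (4 * l * l / μ) * ((μ/2) * ‖ystar x - y‖^2) = 2 * (l^2 * ‖ystar x - y‖^2) := by
      field_simp; ring
    nlinarith [mul_le_mul_of_nonneg_left hqg (by positivity : (0:ℝ) ≤ 4 * l * l / μ)]
  have h4 : ‖gradx f x (ystar x) - h‖ ^ 2 ≤
      2 * ‖gradx f x (ystar x) - gradx f x y‖ ^ 2 + 2 * ‖gradx f x y - h‖ ^ 2 := by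
    nlinarith [htri, hA, hB, hC,
      sq_nonneg (‖gradx f x (ystar x) - gradx f x y‖ - ‖gradx f x y - h‖)]
  linarith [h2, h3, h4]
end

section
/- Suppose f is l-smooth jointly and μ-strongly concave in y with Φ(x) := max_y f(x,y) and ∇Φ(x) = ∇_x f(x,y*(x)), κ = l/μ. Then for all (x,y): ‖∇_x f(x,y)‖² ≤ 2‖∇Φ(x)‖² + 4lκ(Φ(x) − f(x,y)). -/
open scoped RealInnerProductSpace

/-! Strong concavity along the segment from `y` to the maximizer `x` gives
`a (f y - f x) + a b (m/2) ‖y - x‖² ≤ 0` for `a + b = 1`, `a > 0`; dividing by `a` and letting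
`b → 1` yields quadratic growth. Quadratic growth then bounds
`‖y - y*(x)‖²` by `Φ(x) - f(x, y)`, and the Lipschitz bound on `∇ₓ f` in `y` transfers this to
`‖∇ₓ f(x, y) - ∇Φ(x)‖²`. -/

open Filter Topology

theorem norm_sq_le_two_mul_norm_sq_add_two_mul_norm_sub_sq {E : Type*} [SeminormedAddGroup E]
    (a b : E) : ‖a‖ ^ 2 ≤ 2 * ‖b‖ ^ 2 + 2 * ‖a - b‖ ^ 2 :=
  calc ‖a‖ ^ 2 ≤ (‖b‖ + ‖a - b‖) ^ 2 := by gcongr; exact norm_le_insert' a b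
    _ ≤ 2 * (‖b‖ ^ 2 + ‖a - b‖ ^ 2) := add_sq_le
    _ = 2 * ‖b‖ ^ 2 + 2 * ‖a - b‖ ^ 2 := mul_add _ _ _

theorem StrongConcaveOn.add_sq_le_of_isMaxOn {E : Type*} [NormedAddCommGroup E]
    [NormedSpace ℝ E] {s : Set E} {m : ℝ} {f : E → ℝ} {x y : E} (hf : StrongConcaveOn s m f)
    (hmax : IsMaxOn f s x) (hx : x ∈ s) (hy : y ∈ s) :
    f y + m / 2 * ‖y - x‖ ^ 2 ≤ f x := by
  set c := m / 2 * ‖y - x‖ ^ 2 with hc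
  have hsegment : ∀ b ∈ Set.Ioo (0 : ℝ) 1, f y + b * c ≤ f x := by
    rintro b ⟨hb0, hb1⟩
    have hchord := hf.2 hy hx (sub_nonneg.2 hb1.le) hb0.le (sub_add_cancel 1 b)
    have hle : f ((1 - b) • y + b • x) ≤ f x :=
      hmax (hf.1 hy hx (sub_nonneg.2 hb1.le) hb0.le (sub_add_cancel 1 b))
    simp only [smul_eq_mul, ← hc] at hchord
    have hscaled : (1 - b) * (f y + b * c - f x) ≤ 0 := by linarith
    exact sub_nonpos.1 (nonpos_of_mul_nonpos_right hscaled (sub_pos.2 hb1))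
  have hlim : Tendsto (fun b : ℝ => f y + b * c) (𝓝[<] 1) (𝓝 (f y + 1 * c)) :=
    tendsto_nhdsWithin_of_tendsto_nhds ((continuous_const.add
      (continuous_id.mul continuous_const)).tendsto 1)
  rw [← one_mul c]
  exact le_of_tendsto hlim (mem_of_superset (Ioo_mem_nhdsLT zero_lt_one) hsegment)

theorem gradx_bound_via_Phi_general {d : ℕ} (l μ : ℝ) (hμ : 0 < μ)
    (f : EuclideanSpace ℝ (Fin d) → EuclideanSpace ℝ (Fin d) → ℝ)
    (hsmooth_x : ∀ x₁ y₁ x₂ y₂,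
      ‖gradx f x₁ y₁ - gradx f x₂ y₂‖ ≤ l * (‖x₁ - x₂‖ + ‖y₁ - y₂‖))
    (hconc : ∀ x, ConcaveOn ℝ Set.univ (fun y => f x y + (μ / 2) * ‖y‖ ^ 2))
    (ystar : EuclideanSpace ℝ (Fin d) → EuclideanSpace ℝ (Fin d))
    (hmax : ∀ x, IsMaxOn (f x) Set.univ (ystar x))
    (Φ : EuclideanSpace ℝ (Fin d) → ℝ) (hΦ : ∀ x, Φ x = f x (ystar x))
    (hgradΦ : ∀ x, HasGradientAt Φ (gradx f x (ystar x)) x) :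
    ∀ x y, ‖gradx f x y‖ ^ 2 ≤
      2 * ‖gradient Φ x‖ ^ 2 + 4 * l * (l / μ) * (Φ x - f x y) := by
  intro x y
  have hgrad : gradient Φ x = gradx f x (ystar x) := (hgradΦ x).gradient
  have hlip : ‖gradx f x y - gradx f x (ystar x)‖ ≤ l * ‖y - ystar x‖ := by
    simpa using hsmooth_x x y x (ystar x)
  have hgrowth : μ / 2 * ‖y - ystar x‖ ^ 2 ≤ Φ x - f x y := by
    have := (strongConcaveOn_iff_convex.2 (hconc x)).add_sq_le_of_isMaxOn (hmax x)
      (Set.mem_univ _) (Set.mem_univ y)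
    rw [hΦ]
    linarith
  have hcoef : 0 ≤ 4 * l * (l / μ) := by
    rw [mul_assoc, ← mul_div_assoc]
    exact mul_nonneg zero_le_four (div_nonneg (mul_self_nonneg l) hμ.le)
  calc ‖gradx f x y‖ ^ 2
      ≤ 2 * ‖gradient Φ x‖ ^ 2 + 2 * ‖gradx f x y - gradx f x (ystar x)‖ ^ 2 :=
        hgrad ▸ norm_sq_le_two_mul_norm_sq_add_two_mul_norm_sub_sq _ _
    _ ≤ 2 * ‖gradient Φ x‖ ^ 2 + 2 * (l * ‖y - ystar x‖) ^ 2 := by gcongr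
    _ = 2 * ‖gradient Φ x‖ ^ 2 + 4 * l * (l / μ) * (μ / 2 * ‖y - ystar x‖ ^ 2) := by
        field_simp
        ring
    _ ≤ 2 * ‖gradient Φ x‖ ^ 2 + 4 * l * (l / μ) * (Φ x - f x y) := by gcongr

theorem gradx_bound_via_Phi {d : ℕ} (l μ : ℝ) (hl : 0 < l) (hμ : 0 < μ)
    (f : EuclideanSpace ℝ (Fin d) → EuclideanSpace ℝ (Fin d) → ℝ)
    (hdx : ∀ y, Differentiable ℝ (fun x => f x y))
    (hdy : ∀ x, Differentiable ℝ (f x))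
    (hsmooth_x : ∀ x₁ y₁ x₂ y₂,
      ‖gradx f x₁ y₁ - gradx f x₂ y₂‖ ≤ l * (‖x₁ - x₂‖ + ‖y₁ - y₂‖))
    (hsmooth_y : ∀ x₁ y₁ x₂ y₂,
      ‖grady f x₁ y₁ - grady f x₂ y₂‖ ≤ l * (‖x₁ - x₂‖ + ‖y₁ - y₂‖))
    (hconc : ∀ x, ConcaveOn ℝ Set.univ (fun y => f x y + (μ / 2) * ‖y‖ ^ 2))
    (ystar : EuclideanSpace ℝ (Fin d) → EuclideanSpace ℝ (Fin d))
    (hmax : ∀ x, IsMaxOn (f x) Set.univ (ystar x))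
    (Φ : EuclideanSpace ℝ (Fin d) → ℝ) (hΦ : ∀ x, Φ x = f x (ystar x))
    (hgradΦ : ∀ x, HasGradientAt Φ (gradx f x (ystar x)) x) :
    ∀ x y, ‖gradx f x y‖ ^ 2 ≤
      2 * ‖gradient Φ x‖ ^ 2 + 4 * l * (l / μ) * (Φ x - f x y) :=
  gradx_bound_via_Phi_general l μ hμ f hsmooth_x hconc ystar hmax Φ hΦ hgradΦ
end
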